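/- Let |ψ⟩ be a unit vector in H = ⊗_a H_a and N a neighborhood structure. Suppose there exists a Hermitian operator W that is quasi-local relative to N (i.e., W = Σ_k W_{N_k} ⊗ I_{N_k^c}) such that ⟨ψ|W|ψ⟩ < ⟨φ|W|φ⟩ for every unit vector |φ⟩ in the DQLS subspace H_N(|ψ⟩) with |φ⟩⟨φ| ≠ |ψ⟩⟨ψ|. Then |ψ⟩⟨ψ| is the unique density operator whose reduced states on all neighborhoods in N agree with those of |ψ⟩⟨ψ| (i.e., |ψ⟩ is UDA relative to N). -/

import Mathlib

open Matrix ComplexOrder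

variable {A : Type*} [Fintype A] [DecidableEq A]
variable {ι : A → Type*} [∀ a, Fintype (ι a)] [∀ a, DecidableEq (ι a)]

/-- Combine an assignment on a neighborhood `S` with one on its complement. -/
def glue (S : Finset A) (f : ∀ a : {a // a ∈ S}, ι a) (g : ∀ a : {a // a ∉ S}, ι a) :
    ∀ a, ι a := fun a => if h : a ∈ S then f ⟨a, h⟩ else g ⟨a, h⟩

/-- The reduced density matrix of `ρ` on the neighborhood `S` (partial trace over `Sᶜ`). -/
noncomputable def rdm (S : Finset A) (ρ : Matrix (∀ a, ι a) (∀ a, ι a) ℂ) :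
    Matrix (∀ a : {a // a ∈ S}, ι a) (∀ a : {a // a ∈ S}, ι a) ℂ :=
  fun f f' => ∑ g : ∀ a : {a // a ∉ S}, ι a, ρ (glue S f g) (glue S f' g)

/-- Embed an operator on the neighborhood `S` as `M ⊗ I_{Sᶜ}` on the full space. -/
noncomputable def liftN (S : Finset A)
    (M : Matrix (∀ a : {a // a ∈ S}, ι a) (∀ a : {a // a ∈ S}, ι a) ℂ) :
    Matrix (∀ a, ι a) (∀ a, ι a) ℂ :=
  fun i j =>
    if ∀ a : {a // a ∉ S}, i a.1 = j a.1 then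
      M (fun a => i a.1) (fun a => j a.1) else 0

/-!
Let `σ` be a state with the same marginals as `ρ = |ψ⟩⟨ψ|`. Since `W` is quasi-local,
`tr (W σ)` only depends on these marginals, so `tr (W σ) = ⟨ψ|W|ψ⟩`.

For positive semidefinite `σ`, the quadratic form of `rdm_S σ ⊗ I` is a sum of quadratic forms
of `σ` on product vectors, so every vector it kills is killed by `σ`. Hence
`supp σ ⊆ supp (rdm_S σ ⊗ I) = supp (rdm_S ρ ⊗ I)` for every neighborhood `S`, and every
eigenvector of `σ` with nonzero weight lies in the DQLS subspace.

Then `tr (W σ) = ∑ λᵢ ⟨uᵢ|W|uᵢ⟩` is a convex combination of energies that are all at least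
`⟨ψ|W|ψ⟩`, strictly unless `|uᵢ⟩⟨uᵢ| = ρ`. Since the average equals `⟨ψ|W|ψ⟩`, every
eigenprojection of positive weight is `ρ`, so `σ = ρ`.
-/

theorem eq_of_sum_mul_eq_of_le {κ : Type*} [Fintype κ] {w a : κ → ℝ} {b : ℝ}
    (hw : ∀ i, 0 ≤ w i) (hsum : ∑ i, w i = 1) (hle : ∀ i, w i ≠ 0 → b ≤ a i)
    (havg : ∑ i, w i * a i = b) {i : κ} (hi : w i ≠ 0) : a i = b := by
  have hterm : ∀ j, 0 ≤ w j * (a j - b) := fun j => by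
    by_cases hj : w j = 0
    · simp [hj]
    · exact mul_nonneg (hw j) (sub_nonneg.mpr (hle j hj))
  have hzero : ∑ j, w j * (a j - b) = 0 := by
    simp only [mul_sub, Finset.sum_sub_distrib, ← Finset.sum_mul, hsum, havg, one_mul, sub_self]
  simpa [hi, sub_eq_zero] using congrFun ((Fintype.sum_eq_zero_iff_of_nonneg hterm).mp hzero) i

namespace Matrix

variable {n : Type*} [Fintype n]

theorem trace_mul_vecMulVec_star (W : Matrix n n ℂ) (φ : n → ℂ) :
    trace (W * vecMulVec φ (star φ)) = star φ ⬝ᵥ W *ᵥ φ := by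
  rw [mul_vecMulVec, trace_vecMulVec, dotProduct_comm]

theorem eq_vecMulVec_of_eq_sum_smul_vecMulVec {σ W : Matrix n n ℂ} {ψ : n → ℂ}
    {V : Submodule ℂ (n → ℂ)} {μ : n → ℝ} {u : n → n → ℂ}
    (hμ : ∀ i, 0 ≤ μ i) (hsum : ∑ i, μ i = 1) (hu : ∀ i, star (u i) ⬝ᵥ u i = 1)
    (huV : ∀ i, μ i ≠ 0 → u i ∈ V) (hσ : σ = ∑ i, (μ i : ℂ) • vecMulVec (u i) (star (u i)))
    (hmin : ∀ φ ∈ V, star φ ⬝ᵥ φ = 1 → vecMulVec φ (star φ) ≠ vecMulVec ψ (star ψ) →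
      (star ψ ⬝ᵥ W *ᵥ ψ).re < (star φ ⬝ᵥ W *ᵥ φ).re)
    (hW : trace (W * σ) = trace (W * vecMulVec ψ (star ψ))) :
    σ = vecMulVec ψ (star ψ) := by
  have havg : ∑ i, μ i * (star (u i) ⬝ᵥ W *ᵥ u i).re = (star ψ ⬝ᵥ W *ᵥ ψ).re := by
    rw [← trace_mul_vecMulVec_star, ← hW, hσ, Finset.mul_sum, trace_sum, Complex.re_sum]
    refine Finset.sum_congr rfl fun i _ => ?_
    rw [mul_smul_comm, trace_smul, trace_mul_vecMulVec_star, smul_eq_mul, Complex.re_ofReal_mul]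
  have hle : ∀ i, μ i ≠ 0 → (star ψ ⬝ᵥ W *ᵥ ψ).re ≤ (star (u i) ⬝ᵥ W *ᵥ u i).re := by
    intro i hi
    by_cases hρ : vecMulVec (u i) (star (u i)) = vecMulVec ψ (star ψ)
    · rw [← trace_mul_vecMulVec_star, ← trace_mul_vecMulVec_star, hρ]
    · exact (hmin _ (huV i hi) (hu i) hρ).le
  have hpure : ∀ i, μ i ≠ 0 → vecMulVec (u i) (star (u i)) = vecMulVec ψ (star ψ) :=
    fun i hi => by_contra fun hρ =>
      (hmin _ (huV i hi) (hu i) hρ).ne' (eq_of_sum_mul_eq_of_le hμ hsum hle havg hi)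
  calc σ = ∑ i, (μ i : ℂ) • vecMulVec (u i) (star (u i)) := hσ
    _ = ∑ i, (μ i : ℂ) • vecMulVec ψ (star ψ) := Finset.sum_congr rfl fun i _ => by
        by_cases hi : μ i = 0
        · simp [hi]
        · rw [hpure i hi]
    _ = vecMulVec ψ (star ψ) := by
        rw [← Finset.sum_smul, ← Complex.ofReal_sum, hsum, Complex.ofReal_one, one_smul]

variable [DecidableEq n]

theorem IsHermitian.range_mulVecLin_le_range {A B : Matrix n n ℂ} (hA : A.IsHermitian)
    (hB : B.IsHermitian) (h : LinearMap.ker B.mulVecLin ≤ LinearMap.ker A.mulVecLin) :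
    LinearMap.range A.mulVecLin ≤ LinearMap.range B.mulVecLin := by
  have hker : LinearMap.ker B.toEuclideanLin ≤ LinearMap.ker A.toEuclideanLin := fun x hx =>
    congrArg (WithLp.toLp 2) (h (x := x.ofLp) congr(WithLp.ofLp $hx))
  have hrange : LinearMap.range A.toEuclideanLin ≤ LinearMap.range B.toEuclideanLin := by
    rw [← (LinearMap.range A.toEuclideanLin).orthogonal_orthogonal,
      ← (LinearMap.range B.toEuclideanLin).orthogonal_orthogonal,
      (isSymmetric_toEuclideanLin_iff.mpr hA).orthogonal_range,
      (isSymmetric_toEuclideanLin_iff.mpr hB).orthogonal_range]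
    exact Submodule.orthogonal_le hker
  rintro _ ⟨z, rfl⟩
  obtain ⟨w, hw⟩ := hrange ⟨WithLp.toLp 2 z, rfl⟩
  exact ⟨w.ofLp, congr(WithLp.ofLp $hw)⟩

theorem IsHermitian.eq_sum_eigenvalues_smul_vecMulVec {σ : Matrix n n ℂ}
    (hσ : σ.IsHermitian) :
    σ = ∑ i, (hσ.eigenvalues i : ℂ) •
      vecMulVec (⇑(hσ.eigenvectorBasis i)) (star ⇑(hσ.eigenvectorBasis i)) := by
  conv_lhs => rw [hσ.spectral_theorem, Unitary.conjStarAlgAut_apply]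
  ext a b
  simp only [Matrix.sum_apply, Matrix.smul_apply, smul_eq_mul, vecMulVec_apply, mul_apply,
    diagonal_apply, Function.comp_apply, Matrix.star_apply, Pi.star_apply,
    IsHermitian.eigenvectorUnitary_apply, mul_ite, mul_zero, Finset.sum_ite_eq',
    Finset.mem_univ, if_true]
  exact Finset.sum_congr rfl fun i _ => by rw [mul_right_comm, mul_comm]; rfl

theorem IsHermitian.star_eigenvectorBasis_dotProduct_self {σ : Matrix n n ℂ}
    (hσ : σ.IsHermitian) (i : n) :
    star ⇑(hσ.eigenvectorBasis i) ⬝ᵥ ⇑(hσ.eigenvectorBasis i) = 1 := by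
  rw [dotProduct_comm, ← EuclideanSpace.inner_eq_star_dotProduct]
  simp [inner_self_eq_norm_sq_to_K, hσ.eigenvectorBasis.orthonormal.1 i]

theorem PosSemidef.exists_eq_sum_smul_vecMulVec {σ : Matrix n n ℂ} (hσ : σ.PosSemidef)
    (htr : σ.trace = 1) :
    ∃ (μ : n → ℝ) (u : n → n → ℂ), (∀ i, 0 ≤ μ i) ∧ ∑ i, μ i = 1 ∧
      (∀ i, star (u i) ⬝ᵥ u i = 1) ∧ (∀ i, μ i ≠ 0 → u i ∈ LinearMap.range σ.mulVecLin) ∧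
      σ = ∑ i, (μ i : ℂ) • vecMulVec (u i) (star (u i)) := by
  refine ⟨hσ.1.eigenvalues, fun i => hσ.1.eigenvectorBasis i, hσ.eigenvalues_nonneg, ?_,
    hσ.1.star_eigenvectorBasis_dotProduct_self,
    fun i hi => ⟨(hσ.1.eigenvalues i : ℂ)⁻¹ • ⇑(hσ.1.eigenvectorBasis i), ?_⟩,
    hσ.1.eq_sum_eigenvalues_smul_vecMulVec⟩
  · have h := hσ.1.trace_eq_sum_eigenvalues
    rw [htr, ← RCLike.ofReal_sum, ← RCLike.ofReal_one, RCLike.ofReal_inj] at h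
    exact h.symm
  · rw [mulVecLin_apply, mulVec_smul, hσ.1.mulVec_eigenvectorBasis, smul_comm, ← smul_assoc,
      Complex.real_smul, mul_inv_cancel₀ (by exact_mod_cast hi), one_smul]

end Matrix

omit [Fintype A] [∀ a, Fintype (ι a)] [∀ a, DecidableEq (ι a)] in
@[simp]
theorem glue_apply_coe_mem {S : Finset A} (f : ∀ a : {a // a ∈ S}, ι a)
    (g : ∀ a : {a // a ∉ S}, ι a) (a : {a // a ∈ S}) : glue S f g a = f a := by
  simp [glue, a.2]

omit [Fintype A] [∀ a, Fintype (ι a)] [∀ a, DecidableEq (ι a)] in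
@[simp]
theorem glue_apply_coe_not_mem {S : Finset A} (f : ∀ a : {a // a ∈ S}, ι a)
    (g : ∀ a : {a // a ∉ S}, ι a) (a : {a // a ∉ S}) : glue S f g a = g a := by
  simp [glue, a.2]

omit [Fintype A] [∀ a, Fintype (ι a)] [∀ a, DecidableEq (ι a)] in
@[simp]
theorem glue_restrict (S : Finset A) (i : ∀ a, ι a) :
    glue S (fun a : {a // a ∈ S} => i a) (fun a : {a // a ∉ S} => i a) = i := by
  funext a
  by_cases ha : a ∈ S <;> simp [glue, ha]

omit [∀ a, DecidableEq (ι a)] in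
theorem Fintype.sum_eq_sum_sum_glue {M : Type*} [AddCommMonoid M] (S : Finset A)
    (F : (∀ a, ι a) → M) :
    ∑ i, F i =
      ∑ f : ∀ a : {a // a ∈ S}, ι a, ∑ g : ∀ a : {a // a ∉ S}, ι a, F (glue S f g) := by
  rw [← (Equiv.piEquivPiSubtypeProd (· ∈ S) ι).symm.sum_comp, Fintype.sum_prod_type]
  rfl

omit [∀ a, Fintype (ι a)] in
theorem liftN_glue (S : Finset A)
    (M : Matrix (∀ a : {a // a ∈ S}, ι a) (∀ a : {a // a ∈ S}, ι a) ℂ)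
    (f f' : ∀ a : {a // a ∈ S}, ι a) (g g' : ∀ a : {a // a ∉ S}, ι a) :
    liftN S M (glue S f g) (glue S f' g') = if g = g' then M f f' else 0 := by
  simp only [liftN, glue_apply_coe_not_mem, glue_apply_coe_mem, funext_iff]

omit [∀ a, DecidableEq (ι a)] in
theorem dotProduct_mulVec_eq_sum_glue (S : Finset A) (M : Matrix (∀ a, ι a) (∀ a, ι a) ℂ)
    (x y : (∀ a, ι a) → ℂ) :
    star x ⬝ᵥ M *ᵥ y = ∑ f, ∑ g, ∑ f', ∑ g',
      star (x (glue S f g)) * (M (glue S f g) (glue S f' g') * y (glue S f' g')) := by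
  simp only [dotProduct, mulVec, Pi.star_apply, Finset.mul_sum]
  rw [Fintype.sum_eq_sum_sum_glue S]
  simp only [Fintype.sum_eq_sum_sum_glue S (fun j => star (x _) * (M _ j * y j))]

theorem trace_liftN_mul (S : Finset A)
    (M : Matrix (∀ a : {a // a ∈ S}, ι a) (∀ a : {a // a ∈ S}, ι a) ℂ)
    (σ : Matrix (∀ a, ι a) (∀ a, ι a) ℂ) :
    trace (liftN S M * σ) = trace (M * rdm S σ) := by
  simp only [trace, diag_apply, mul_apply, rdm, Finset.mul_sum]
  rw [Fintype.sum_eq_sum_sum_glue S]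
  simp only [Fintype.sum_eq_sum_sum_glue S (fun j => liftN S M _ j * σ j _), liftN_glue, ite_mul,
    zero_mul, Finset.sum_ite_eq, Finset.mem_univ, if_true]
  exact Finset.sum_congr rfl fun f _ => Finset.sum_comm

omit [∀ a, DecidableEq (ι a)] in
theorem rdm_isHermitian {S : Finset A} {σ : Matrix (∀ a, ι a) (∀ a, ι a) ℂ}
    (hσ : σ.IsHermitian) : (rdm S σ).IsHermitian := by
  ext f f'
  simp only [conjTranspose_apply, rdm, star_sum]
  exact Finset.sum_congr rfl fun g _ => hσ.apply _ _

omit [∀ a, Fintype (ι a)] in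
theorem liftN_isHermitian {S : Finset A}
    {M : Matrix (∀ a : {a // a ∈ S}, ι a) (∀ a : {a // a ∈ S}, ι a) ℂ}
    (hM : M.IsHermitian) : (liftN S M).IsHermitian := by
  ext i j
  simp only [conjTranspose_apply, liftN, eq_comm (a := i _)]
  split_ifs <;> simp [hM.apply]

/-- The product vector `y ⊗ |g⟩`. -/
def glueSingle (S : Finset A) (y : (∀ a : {a // a ∈ S}, ι a) → ℂ)
    (g : ∀ a : {a // a ∉ S}, ι a) : (∀ a, ι a) → ℂ :=
  fun i => if (fun a : {a // a ∉ S} => i a) = g then y (fun a => i a) else 0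

omit [∀ a, Fintype (ι a)] in
theorem glueSingle_glue (S : Finset A) (y : (∀ a : {a // a ∈ S}, ι a) → ℂ)
    (f : ∀ a : {a // a ∈ S}, ι a) (g g' : ∀ a : {a // a ∉ S}, ι a) :
    glueSingle S y g' (glue S f g) = if g = g' then y f else 0 := by
  simp [glueSingle]

theorem eq_sum_glueSingle (S : Finset A) (x : (∀ a, ι a) → ℂ) :
    x = ∑ g, glueSingle S (fun f => x (glue S f g)) g := by
  funext i
  simp [glueSingle, Finset.sum_apply]

theorem star_dotProduct_liftN_rdm_mulVec (S : Finset A) (σ : Matrix (∀ a, ι a) (∀ a, ι a) ℂ)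
    (x : (∀ a, ι a) → ℂ) :
    star x ⬝ᵥ liftN S (rdm S σ) *ᵥ x = ∑ g, ∑ g',
      star (glueSingle S (fun f => x (glue S f g)) g') ⬝ᵥ
        σ *ᵥ glueSingle S (fun f => x (glue S f g)) g' := by
  simp only [dotProduct_mulVec_eq_sum_glue S, liftN_glue, glueSingle_glue, mul_ite, ite_mul,
    mul_zero, zero_mul, apply_ite star, star_zero, Finset.sum_ite_irrel, Finset.sum_const_zero,
    Finset.sum_ite_eq, Finset.sum_ite_eq', Finset.mem_univ, if_true]
  simp only [rdm, Finset.sum_mul, Finset.mul_sum]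
  rw [Finset.sum_comm]
  exact Finset.sum_congr rfl fun g _ =>
    (Finset.sum_congr rfl fun f _ => Finset.sum_comm).trans Finset.sum_comm

theorem Matrix.PosSemidef.mulVec_eq_zero_of_liftN_rdm_mulVec_eq_zero {S : Finset A}
    {σ : Matrix (∀ a, ι a) (∀ a, ι a) ℂ} (hσ : σ.PosSemidef) {x : (∀ a, ι a) → ℂ}
    (hx : liftN S (rdm S σ) *ᵥ x = 0) : σ *ᵥ x = 0 := by
  set v := fun g g' => glueSingle S (fun f => x (glue S f g)) g'
  have hnonneg : ∀ g g', 0 ≤ star (v g g') ⬝ᵥ σ *ᵥ v g g' :=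
    fun _ _ => hσ.dotProduct_mulVec_nonneg _
  have hzero : ∑ g, ∑ g', star (v g g') ⬝ᵥ σ *ᵥ v g g' = 0 := by
    rw [← star_dotProduct_liftN_rdm_mulVec, hx, dotProduct_zero]
  have hdiag : ∀ g, σ *ᵥ v g g = 0 := fun g => by
    rw [← hσ.dotProduct_mulVec_zero_iff]
    have hrow := (Fintype.sum_eq_zero_iff_of_nonneg fun g => Finset.sum_nonneg fun g' _ =>
      hnonneg g g').mp hzero
    exact congrFun ((Fintype.sum_eq_zero_iff_of_nonneg (hnonneg g)).mp (congrFun hrow g)) g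
  rw [eq_sum_glueSingle S x, mulVec_sum]
  exact Fintype.sum_eq_zero _ hdiag

theorem Matrix.PosSemidef.range_mulVecLin_le_range_liftN_rdm
    {σ : Matrix (∀ a, ι a) (∀ a, ι a) ℂ} (hσ : σ.PosSemidef) (S : Finset A) :
    LinearMap.range σ.mulVecLin ≤ LinearMap.range (liftN S (rdm S σ)).mulVecLin :=
  hσ.1.range_mulVecLin_le_range (liftN_isHermitian (rdm_isHermitian hσ.1))
    fun _ => hσ.mulVec_eq_zero_of_liftN_rdm_mulVec_eq_zero

theorem UDA_witness_general {K : Type*} [Fintype K] (Nhd : K → Finset A)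
    (ψ : (∀ a, ι a) → ℂ)
    (W : Matrix (∀ a, ι a) (∀ a, ι a) ℂ)
    (hQL : ∃ Wk : ∀ k, Matrix (∀ a : {a // a ∈ Nhd k}, ι a) (∀ a : {a // a ∈ Nhd k}, ι a) ℂ,
      W = ∑ k, liftN (Nhd k) (Wk k))
    (hwit : ∀ φ : (∀ a, ι a) → ℂ,
      φ ∈ (⨅ k, LinearMap.range
        (liftN (Nhd k) (rdm (Nhd k) (vecMulVec ψ (star ψ)))).mulVecLin) →
      star φ ⬝ᵥ φ = 1 → vecMulVec φ (star φ) ≠ vecMulVec ψ (star ψ) →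
      (star ψ ⬝ᵥ W.mulVec ψ).re < (star φ ⬝ᵥ W.mulVec φ).re) :
    ∀ σ : Matrix (∀ a, ι a) (∀ a, ι a) ℂ, σ.PosSemidef → σ.trace = 1 →
      (∀ k, rdm (Nhd k) σ = rdm (Nhd k) (vecMulVec ψ (star ψ))) →
      σ = vecMulVec ψ (star ψ) := by
  intro σ hσ htr hrdm
  obtain ⟨Wk, rfl⟩ := hQL
  obtain ⟨μ, u, hμ, hsum, hu, hrange, hdecomp⟩ := hσ.exists_eq_sum_smul_vecMulVec htr
  refine eq_vecMulVec_of_eq_sum_smul_vecMulVec hμ hsum hu (fun i hi => ?_) hdecomp hwit ?_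
  · exact Submodule.mem_iInf _ |>.mpr fun k =>
      hrdm k ▸ hσ.range_mulVecLin_le_range_liftN_rdm (Nhd k) (hrange i hi)
  · simp only [Finset.sum_mul, trace_sum, trace_liftN_mul, hrdm]

/-- if a quasi-local Hermitian observable W attains its strict minimum
expectation over the DQLS subspace of |ψ⟩ uniquely at |ψ⟩, then |ψ⟩ is UDA. -/
theorem UDA_witness {K : Type*} [Fintype K] (Nhd : K → Finset A)
    (ψ : (∀ a, ι a) → ℂ) (hψ : star ψ ⬝ᵥ ψ = 1)
    (W : Matrix (∀ a, ι a) (∀ a, ι a) ℂ) (hherm : W.IsHermitian)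
    (hQL : ∃ Wk : ∀ k, Matrix (∀ a : {a // a ∈ Nhd k}, ι a) (∀ a : {a // a ∈ Nhd k}, ι a) ℂ,
      W = ∑ k, liftN (Nhd k) (Wk k))
    (hwit : ∀ φ : (∀ a, ι a) → ℂ,
      φ ∈ (⨅ k, LinearMap.range
        (liftN (Nhd k) (rdm (Nhd k) (vecMulVec ψ (star ψ)))).mulVecLin) →
      star φ ⬝ᵥ φ = 1 → vecMulVec φ (star φ) ≠ vecMulVec ψ (star ψ) →
      (star ψ ⬝ᵥ W.mulVec ψ).re < (star φ ⬝ᵥ W.mulVec φ).re) :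
    ∀ σ : Matrix (∀ a, ι a) (∀ a, ι a) ℂ, σ.PosSemidef → σ.trace = 1 →
      (∀ k, rdm (Nhd k) σ = rdm (Nhd k) (vecMulVec ψ (star ψ))) →
      σ = vecMulVec ψ (star ψ) :=
  UDA_witness_general Nhd ψ W hQL hwit
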